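/- arXiv:1509.01958 — 2 statements merged into one kernel-verified Lean document; each statement's English description precedes it below -/
import Mathlib

section
/- For every i ≥ 1, the element a_i satisfies (a_i)^(N_i) = (a_{i−1})^(N_i + 1). -/
/-!
Write `L = L_{i-1}` and `q = 2^(2^i)`. Each `c_n` is a root of the quadratic `X^2 + X + a_{n-1}`
over `L_{n-1}` but does not lie in it, so the tower has degree `2` at every step and `|L| = q`.
The Frobenius `x ↦ x^q` fixes exactly `L`, so it sends `c_i` to the other root `c_i + 1` of its
quadratic. Hence `c_i^(N_i) = c_i (c_i + 1) = a_{i-1}`, and multiplying by `a_{i-1}^(N_i)` gives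
the claim.
-/

/-- The `j`-th Fermat number `N_j = 2^(2^j) + 1`. -/
def fermatN (j : ℕ) : ℕ := 2 ^ 2 ^ j + 1

/-- `conwayL c n` is the subfield `L_{n-1}` of the algebraic closure of `F_2`
generated over `F_2` by `c 0, …, c (n-1)`; in particular `conwayL c 0 = ⊥ = F_2`. -/
noncomputable def conwayL (c : ℕ → AlgebraicClosure (ZMod 2)) (n : ℕ) :
    IntermediateField (ZMod 2) (AlgebraicClosure (ZMod 2)) :=
  IntermediateField.adjoin (ZMod 2) (c '' Set.Iio n)

open Polynomial IntermediateField

theorem CharTwo.eq_or_eq_add_one_of_sq_add_self_eq {R : Type*} [CommRing R] [IsDomain R]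
    [CharP R 2] {x y : R} (h : y ^ 2 + y = x ^ 2 + x) : y = x ∨ y = x + 1 := by
  have : (y + x) * (y + x + 1) = 0 := by
    linear_combination h + (x ^ 2 + x * y + x) * CharTwo.two_eq_zero (R := R)
  rcases mul_eq_zero.mp this with h | h
  · exact Or.inl (CharTwo.add_eq_zero.mp h)
  · exact Or.inr (CharTwo.add_eq_zero.mp (by rw [← h]; ring))

theorem Subfield.mem_iff_pow_card_eq_self {E : Type*} [Field E] (K : Subfield E) [Finite K]
    {x : E} : x ∈ K ↔ x ^ Nat.card K = x := by
  have := Fintype.ofFinite K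
  rw [Nat.card_eq_fintype_card]
  refine ⟨fun hx => congrArg Subtype.val (FiniteField.pow_card (⟨x, hx⟩ : K)), fun hx => ?_⟩
  -- `X^q - X` has all `q` elements of `K` as roots, so it splits over `K`.
  have hroots : ((X ^ Fintype.card K - X : K[X]).map K.subtype).roots
      = Finset.univ.val.map K.subtype := by
    rw [← FiniteField.roots_X_pow_card_sub_X K]
    refine (roots_map_of_injective_of_card_eq_natDegree K.subtype.injective ?_).symm
    rw [FiniteField.roots_X_pow_card_sub_X, FiniteField.X_pow_card_sub_X_natDegree_eq K
      Fintype.one_lt_card, Finset.card_val, Finset.card_univ]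
  have hne : (X ^ Fintype.card K - X : E[X]) ≠ 0 :=
    FiniteField.X_pow_card_sub_X_ne_zero E Fintype.one_lt_card
  have hmem : x ∈ ((X ^ Fintype.card K - X : K[X]).map K.subtype).roots := by
    simpa [mem_roots hne, sub_eq_zero] using hx
  obtain ⟨y, -, rfl⟩ := Multiset.mem_map.mp (hroots ▸ hmem)
  exact y.2

theorem Subfield.pow_card_eq_add_one {E : Type*} [Field E] [CharP E 2] (K : Subfield E)
    [Finite K] {x : E} (hx : x ^ 2 + x ∈ K) (hxK : x ∉ K) : x ^ Nat.card K = x + 1 := by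
  have := Fintype.ofFinite K
  obtain ⟨n, -, hn⟩ := FiniteField.card K 2
  rw [← Nat.card_eq_fintype_card] at hn
  have hfrob : (x ^ Nat.card K) ^ 2 + x ^ Nat.card K = x ^ 2 + x := by
    rw [← K.mem_iff_pow_card_eq_self.mp hx, hn, add_pow_char_pow, ← pow_mul, ← pow_mul, mul_comm]
  refine (CharTwo.eq_or_eq_add_one_of_sq_add_self_eq hfrob).resolve_left fun h => hxK ?_
  exact K.mem_iff_pow_card_eq_self.mpr h

theorem IntermediateField.finrank_adjoin_eq_two {K E : Type*} [Field K] [Field E] [Algebra K E]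
    {x : E} {p : K[X]} (hp : p.Monic) (hdeg : p.natDegree = 2) (hx : aeval x p = 0)
    (hxK : x ∉ (algebraMap K E).range) : Module.finrank K K⟮x⟯ = 2 := by
  have hint : IsIntegral K x := ⟨p, hp, hx⟩
  rw [adjoin.finrank hint]
  exact le_antisymm (hdeg ▸ natDegree_le_of_dvd (minpoly.dvd K x hx) hp.ne_zero)
    ((minpoly.two_le_natDegree_iff hint).mpr hxK)

section Conway

variable (c : ℕ → AlgebraicClosure (ZMod 2))

theorem conwayL_zero : conwayL c 0 = ⊥ := by
  simp [conwayL]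

theorem conwayL_succ (n : ℕ) :
    conwayL c (n + 1) = ((conwayL c n)⟮c n⟯).restrictScalars (ZMod 2) := by
  rw [conwayL, conwayL, adjoin_adjoin_left, Set.union_singleton, ← Set.image_insert_eq,
    ← Order.Iio_succ_eq_insert, Order.succ_eq_add_one]

theorem prod_range_mem_conwayL (n : ℕ) : ∏ j ∈ Finset.range n, c j ∈ conwayL c n :=
  prod_mem fun j hj => subset_adjoin _ _ ⟨j, by simpa using hj, rfl⟩

/-- The defining conditions of Conway's tower, uniformly in `n` (for `n = 0` the product is
empty and `conwayL c 0 = F_2`); in characteristic `2`, `x^2 + x + a = 0` reads `x^2 + x = a`. -/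
structure IsConwayTower : Prop where
  sq_add_self_eq_prod : ∀ n, c n ^ 2 + c n = ∏ j ∈ Finset.range n, c j
  not_mem_conwayL : ∀ n, c n ∉ conwayL c n

variable {c}

theorem IsConwayTower.of_succ (hc0 : c 0 ^ 2 + c 0 + 1 = 0)
    (hrec : ∀ i : ℕ, c (i + 1) ^ 2 + c (i + 1) + ∏ j ∈ Finset.range (i + 1), c j = 0)
    (hnot : ∀ i : ℕ, c (i + 1) ∉ conwayL c (i + 1)) : IsConwayTower c where
  sq_add_self_eq_prod
    | 0 => by simpa using CharTwo.add_eq_zero.mp hc0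
    | n + 1 => CharTwo.add_eq_zero.mp (hrec n)
  not_mem_conwayL
    | 0 => by
      rw [conwayL_zero, mem_bot]
      rintro ⟨y, hy⟩
      have hroot : ∀ z : ZMod 2, z ^ 2 + z + 1 ≠ 0 := by decide
      exact hroot y <| (algebraMap (ZMod 2) (AlgebraicClosure (ZMod 2))).injective <| by
        rw [map_add, map_add, map_pow, map_one, map_zero, hy, hc0]
    | n + 1 => hnot n

theorem IsConwayTower.finrank_conwayL (hc : IsConwayTower c) (n : ℕ) :
    Module.finrank (ZMod 2) (conwayL c n) = 2 ^ n := by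
  induction n with
  | zero => simp [conwayL_zero]
  | succ n ih =>
    have hstep : Module.finrank (conwayL c n) (conwayL c n)⟮c n⟯ = 2 := by
      refine finrank_adjoin_eq_two (p := X ^ 2 + X - C ⟨_, prod_range_mem_conwayL c n⟩)
        (by monicity!) (by compute_degree!) ?_ ?_
      · simp [hc.sq_add_self_eq_prod n]
      · simpa using hc.not_mem_conwayL n
    calc Module.finrank (ZMod 2) (conwayL c (n + 1))
        = Module.finrank (ZMod 2) (conwayL c n)⟮c n⟯ := by rw [conwayL_succ]; rfl
      _ = 2 ^ (n + 1) := by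
        rw [← Module.finrank_mul_finrank (ZMod 2) (conwayL c n), ih, hstep, pow_succ]

theorem IsConwayTower.natCard_conwayL (hc : IsConwayTower c) (n : ℕ) :
    Nat.card (conwayL c n) = 2 ^ 2 ^ n := by
  have : Module.Finite (ZMod 2) (conwayL c n) :=
    Module.finite_of_finrank_pos (by rw [hc.finrank_conwayL]; positivity)
  rw [Module.natCard_eq_pow_finrank (K := ZMod 2), Nat.card_zmod, hc.finrank_conwayL]

theorem IsConwayTower.pow_two_pow_two_pow_eq_add_one (hc : IsConwayTower c) (n : ℕ) :
    c n ^ 2 ^ 2 ^ n = c n + 1 := by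
  have hcard : Nat.card (conwayL c n).toSubfield = 2 ^ 2 ^ n := hc.natCard_conwayL n
  have : Finite (conwayL c n).toSubfield := Nat.finite_of_card_ne_zero (hcard ▸ by positivity)
  rw [← hcard]
  refine (conwayL c n).toSubfield.pow_card_eq_add_one ?_ (hc.not_mem_conwayL n)
  rw [hc.sq_add_self_eq_prod]
  exact prod_range_mem_conwayL c n

theorem IsConwayTower.pow_fermatN (hc : IsConwayTower c) (n : ℕ) :
    c n ^ fermatN n = ∏ j ∈ Finset.range n, c j := by
  rw [fermatN, pow_succ, hc.pow_two_pow_two_pow_eq_add_one, ← hc.sq_add_self_eq_prod]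
  ring

end Conway

theorem conway_a_pow_fermat_general (c : ℕ → AlgebraicClosure (ZMod 2))
    (hc0 : c 0 ^ 2 + c 0 + 1 = 0)
    (hrec : ∀ i : ℕ, c (i + 1) ^ 2 + c (i + 1) + ∏ j ∈ Finset.range (i + 1), c j = 0)
    (hnot : ∀ i : ℕ, c (i + 1) ∉ conwayL c (i + 1))
    (i : ℕ) :
    (∏ j ∈ Finset.range (i + 1), c j) ^ fermatN i
      = (∏ j ∈ Finset.range i, c j) ^ (fermatN i + 1) := by
  rw [Finset.prod_range_succ, mul_pow, (IsConwayTower.of_succ hc0 hrec hnot).pow_fermatN,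
    ← pow_succ]

/-- For every `i ≥ 1`, `(a_i)^(N_i) = (a_{i−1})^(N_i + 1)`,
where `a_k = ∏_{j=0}^{k} c_j`. -/
theorem conway_a_pow_fermat (c : ℕ → AlgebraicClosure (ZMod 2))
    (hc0 : c 0 ^ 2 + c 0 + 1 = 0)
    (hrec : ∀ i : ℕ, c (i + 1) ^ 2 + c (i + 1) + ∏ j ∈ Finset.range (i + 1), c j = 0)
    (hnot : ∀ i : ℕ, c (i + 1) ∉ conwayL c (i + 1))
    (i : ℕ) (hi : 1 ≤ i) :
    (∏ j ∈ Finset.range (i + 1), c j) ^ fermatN i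
      = (∏ j ∈ Finset.range i, c j) ^ (fermatN i + 1) :=
  conway_a_pow_fermat_general c hc0 hrec hnot i
end

section
/- For every k ≥ 0 and every i > k, the identity (c_i)^(∏_{j=0}^{k} N_{i−j}) = (a_{i−k−1})^(∏_{j=1}^{k} (N_{i−j} + 1)) holds, where an empty product equals 1. -/
open Polynomial

theorem Subfield.injOn_add_mul {K : Type*} [Field K] (S : Subfield K) {y : K} (hy : y ∉ S) :
    Set.InjOn (fun p : K × K => p.1 + p.2 * y) (S ×ˢ S) := by
  rintro ⟨u, v⟩ ⟨hu, hv⟩ ⟨u', v'⟩ ⟨hu', hv'⟩ h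
  simp only at h
  by_cases hvv : v = v'
  · subst hvv
    simp [add_right_cancel h]
  · refine absurd ?_ hy
    have hy' : y = (u - u') / (v' - v) := by
      rw [eq_div_iff (sub_ne_zero.mpr (Ne.symm hvv))]
      linear_combination -h
    rw [hy']
    exact S.div_mem (S.sub_mem hu hu') (S.sub_mem hv' hv)

section Frobenius

variable {F : Type*} [Field F] [CharP F 2]

variable (F) in
def frobeniusFixed (m : ℕ) : Subfield F :=
  (iterateFrobenius F 2 m).eqLocusField (RingHom.id F)

theorem mem_frobeniusFixed {m : ℕ} {x : F} : x ∈ frobeniusFixed F m ↔ x ^ 2 ^ m = x :=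
  Iff.rfl

theorem frobeniusFixed_mono {m n : ℕ} (h : m ∣ n) : frobeniusFixed F m ≤ frobeniusFixed F n := by
  obtain ⟨k, rfl⟩ := h
  intro x hx
  rw [mem_frobeniusFixed] at hx ⊢
  induction k with
  | zero => simp
  | succ k ih => rw [Nat.mul_succ, pow_add, pow_mul, ih, hx]

theorem mem_frobeniusFixed_two_mul {m : ℕ} {y : F} (hy : y ^ 2 ^ m = y + 1) :
    y ∈ frobeniusFixed F (2 * m) := by
  rw [mem_frobeniusFixed, two_mul, pow_add, pow_mul, hy, add_pow_char_pow, hy, one_pow, add_assoc,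
    CharTwo.add_self_eq_zero, add_zero]

theorem coe_frobeniusFixed_eq_rootSet {m : ℕ} (hm : m ≠ 0) :
    (frobeniusFixed F m : Set F) = (X ^ 2 ^ m - X : F[X]).rootSet F := by
  ext x
  simp [mem_rootSet, FiniteField.X_pow_card_sub_X_ne_zero F (Nat.one_lt_two_pow hm), sub_eq_zero,
    mem_frobeniusFixed]

theorem ncard_frobeniusFixed [IsAlgClosed F] {m : ℕ} (hm : m ≠ 0) :
    (frobeniusFixed F m : Set F).ncard = 2 ^ m := by
  rw [coe_frobeniusFixed_eq_rootSet hm, ← Nat.card_coe_set_eq, Nat.card_eq_fintype_card,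
    card_rootSet_eq_natDegree (galois_poly_separable 2 _ (dvd_pow_self 2 hm))
      (IsAlgClosed.splits _),
    FiniteField.X_pow_card_sub_X_natDegree_eq F (Nat.one_lt_two_pow hm)]

theorem pow_two_pow_eq_self_or_eq_add_one {m : ℕ} {y a : F} (hy : y ^ 2 + y + a = 0)
    (ha : a ∈ frobeniusFixed F m) : y ^ 2 ^ m = y ∨ y ^ 2 ^ m = y + 1 := by
  set z := y ^ 2 ^ m
  have hz : z ^ 2 + z + a = 0 := by
    have := congrArg (iterateFrobenius F 2 m) hy
    rwa [map_add, map_add, map_pow, map_zero, show iterateFrobenius F 2 m a = a from ha] at this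
  have : (z - y) * (z - y - 1) = 0 := by
    linear_combination hz - hy + (y ^ 2 - z * y - z + y) * CharTwo.two_eq_zero (R := F)
  rcases mul_eq_zero.mp this with h | h
  · exact Or.inl (sub_eq_zero.mp h)
  · exact Or.inr (by linear_combination h)

theorem coe_frobeniusFixed_two_mul [IsAlgClosed F] {m : ℕ} {y : F} (hy : y ^ 2 ^ m = y + 1) :
    (frobeniusFixed F (2 * m) : Set F) =
      (fun p : F × F => p.1 + p.2 * y) ''
        ((frobeniusFixed F m : Set F) ×ˢ (frobeniusFixed F m : Set F)) := by
  have hm : m ≠ 0 := by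
    rintro rfl
    simp at hy
  have hy_not : y ∉ frobeniusFixed F m := fun h => by
    rw [mem_frobeniusFixed, hy] at h
    simp at h
  have hm2 : 2 * m ≠ 0 := mul_ne_zero two_ne_zero hm
  refine (Set.eq_of_subset_of_ncard_le ?_ ?_ ?_).symm
  · rintro _ ⟨⟨u, v⟩, ⟨hu, hv⟩, rfl⟩
    have hle := frobeniusFixed_mono (F := F) (dvd_mul_left m 2)
    exact add_mem (hle hu) (mul_mem (hle hv) (mem_frobeniusFixed_two_mul hy))
  · rw [((frobeniusFixed F m).injOn_add_mul hy_not).ncard_image, Set.ncard_prod,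
      ncard_frobeniusFixed hm, ncard_frobeniusFixed hm2, two_mul, pow_add]
  · exact Set.finite_of_ncard_pos (by rw [ncard_frobeniusFixed hm2]; positivity)

end Frobenius

section ConwayTower

variable {c : ℕ → AlgebraicClosure (ZMod 2)}

theorem conwayL_mono {m n : ℕ} (h : m ≤ n) : conwayL c m ≤ conwayL c n :=
  IntermediateField.adjoin.mono _ _ _ (Set.image_mono (Set.Iio_subset_Iio h))

theorem mem_conwayL {j n : ℕ} (h : j < n) : c j ∈ conwayL c n :=
  IntermediateField.subset_adjoin _ _ (Set.mem_image_of_mem c h)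

theorem frobeniusFixed_subset_conwayL {n : ℕ} (hc : ∀ j < n, c j ^ 2 ^ 2 ^ j = c j + 1) :
    (frobeniusFixed (AlgebraicClosure (ZMod 2)) (2 ^ n) : Set _) ⊆
      (conwayL c n : Set (AlgebraicClosure (ZMod 2))) := by
  induction n with
  | zero =>
    intro x hx
    have : x * (x - 1) = 0 := by
      rw [SetLike.mem_coe, mem_frobeniusFixed] at hx
      linear_combination hx
    rcases mul_eq_zero.mp this with h | h
    · rw [h]
      exact zero_mem _
    · rw [sub_eq_zero.mp h]
      exact one_mem _
  | succ n ih =>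
    rw [pow_succ', coe_frobeniusFixed_two_mul (hc n n.lt_succ_self)]
    rintro _ ⟨⟨u, v⟩, ⟨hu, hv⟩, rfl⟩
    have hL := conwayL_mono (c := c) n.le_succ
    have ih' := ih fun j hj => hc j (hj.trans n.lt_succ_self)
    exact add_mem (hL (ih' hu)) (mul_mem (hL (ih' hv)) (mem_conwayL n.lt_succ_self))

theorem conway_pow_eq_add_one (hc0 : c 0 ^ 2 + c 0 + 1 = 0)
    (hrec : ∀ i : ℕ, c (i + 1) ^ 2 + c (i + 1) + ∏ j ∈ Finset.range (i + 1), c j = 0)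
    (hnot : ∀ i : ℕ, c (i + 1) ∉ conwayL c (i + 1)) (n : ℕ) : c n ^ 2 ^ 2 ^ n = c n + 1 := by
  induction n using Nat.strong_induction_on with
  | _ n ih =>
  cases n with
  | zero =>
    linear_combination hc0 - (c 0 + 1) * CharTwo.two_eq_zero (R := AlgebraicClosure (ZMod 2))
  | succ n =>
    have ha : ∏ j ∈ Finset.range (n + 1), c j ∈ frobeniusFixed _ (2 ^ (n + 1)) := by
      refine prod_mem fun j hj => ?_
      have hcj := mem_frobeniusFixed_two_mul (ih j (Finset.mem_range.mp hj))
      rw [← pow_succ'] at hcj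
      exact frobeniusFixed_mono (pow_dvd_pow 2 (Finset.mem_range.mp hj)) hcj
    refine (pow_two_pow_eq_self_or_eq_add_one (hrec n) ha).resolve_left fun h => hnot n ?_
    exact frobeniusFixed_subset_conwayL ih (mem_frobeniusFixed.mpr h)

theorem conway_pow_fermatN (hc0 : c 0 ^ 2 + c 0 + 1 = 0)
    (hrec : ∀ i : ℕ, c (i + 1) ^ 2 + c (i + 1) + ∏ j ∈ Finset.range (i + 1), c j = 0)
    (hnot : ∀ i : ℕ, c (i + 1) ∉ conwayL c (i + 1)) (n : ℕ) :
    c (n + 1) ^ fermatN (n + 1) = ∏ j ∈ Finset.range (n + 1), c j := by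
  rw [fermatN, pow_succ, conway_pow_eq_add_one hc0 hrec hnot]
  linear_combination hrec n -
    (∏ j ∈ Finset.range (n + 1), c j) * CharTwo.two_eq_zero (R := AlgebraicClosure (ZMod 2))

end ConwayTower

theorem pow_prod_eq_prod_pow_of_pow_eq_prod {M : Type*} [CommMonoid M] {a : ℕ → M} {e : ℕ → ℕ}
    (h : ∀ n, a (n + 1) ^ e (n + 1) = ∏ j ∈ Finset.range (n + 1), a j) {k i : ℕ} (hik : k < i) :
    a i ^ ∏ j ∈ Finset.range (k + 1), e (i - j) =
      (∏ j ∈ Finset.range (i - k), a j) ^ ∏ j ∈ Finset.Icc 1 k, (e (i - j) + 1) := by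
  induction k with
  | zero =>
    obtain ⟨n, rfl⟩ : ∃ n, i = n + 1 := ⟨i - 1, by omega⟩
    simp [h n]
  | succ k ih =>
    have step : (∏ j ∈ Finset.range (i - k), a j) ^ e (i - (k + 1)) =
        (∏ j ∈ Finset.range (i - (k + 1)), a j) ^ (e (i - (k + 1)) + 1) := by
      obtain ⟨n, hn⟩ : ∃ n, i - (k + 1) = n + 1 := ⟨i - k - 2, by omega⟩
      rw [show i - k = n + 1 + 1 by omega, hn, Finset.prod_range_succ, mul_pow, h n, pow_succ]
    calc a i ^ ∏ j ∈ Finset.range (k + 1 + 1), e (i - j)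
        = ((∏ j ∈ Finset.range (i - k), a j) ^ e (i - (k + 1))) ^
            ∏ j ∈ Finset.Icc 1 k, (e (i - j) + 1) := by
          rw [Finset.prod_range_succ, pow_mul, ih (by omega), ← pow_mul, ← pow_mul, mul_comm]
      _ = _ := by
          rw [step, ← pow_mul, Finset.prod_Icc_succ_top (by omega), mul_comm]

/-- For every `k ≥ 0` and every `i > k`,
`(c_i)^(∏_{j=0}^{k} N_{i−j}) = (a_{i−k−1})^(∏_{j=1}^{k} (N_{i−j} + 1))`,
where `a_m = ∏_{j=0}^{m} c_j` and an empty product equals 1. -/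
theorem conway_c_pow_prod_fermat (c : ℕ → AlgebraicClosure (ZMod 2))
    (hc0 : c 0 ^ 2 + c 0 + 1 = 0)
    (hrec : ∀ i : ℕ, c (i + 1) ^ 2 + c (i + 1) + ∏ j ∈ Finset.range (i + 1), c j = 0)
    (hnot : ∀ i : ℕ, c (i + 1) ∉ conwayL c (i + 1))
    (k i : ℕ) (hik : k < i) :
    c i ^ (∏ j ∈ Finset.range (k + 1), fermatN (i - j))
      = (∏ j ∈ Finset.range (i - k), c j) ^ (∏ j ∈ Finset.Icc 1 k, (fermatN (i - j) + 1)) :=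
  pow_prod_eq_prod_pow_of_pow_eq_prod (conway_pow_fermatN hc0 hrec hnot) hik
end
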